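/- arXiv:2311.06437 — 8 statements merged into one kernel-verified Lean document; each statement's English description precedes it below -/
import Mathlib

section
/- Let $F:[0,\infty)\to[0,\infty)$ be a Hölder continuous function such that $\sup_{t\ge a} F(t)\,e^{\int_a^t F(s)\,ds} < \infty$ for some $a\ge 0$. Then $F(t)\to 0$ as $t\to\infty$. -/
open Filter MeasureTheory

/-- A nonnegative Hölder continuous function `F` on `[0,∞)` such that
`F(t) * exp(∫_a^t F)` is bounded for `t ≥ a` (for some `a ≥ 0`) tends to `0` at infinity. -/
theorem holder_bounded_exp_integral_tendsto_zero
    (F : ℝ → ℝ) (hFnonneg : ∀ t ≥ (0:ℝ), 0 ≤ F t)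
    (hHolder : ∃ C > (0:ℝ), ∃ s ∈ Set.Ioc (0:ℝ) 1,
      ∀ x ≥ (0:ℝ), ∀ y ≥ (0:ℝ), |F x - F y| ≤ C * |x - y| ^ s)
    (a : ℝ) (ha : 0 ≤ a)
    (hbdd : ∃ K : ℝ, ∀ t ≥ a, F t * Real.exp (∫ s in a..t, F s) ≤ K) :
    Tendsto F atTop (nhds 0) := by
  obtain ⟨C, hC, s, ⟨hs0, hs1⟩, hH⟩ := hHolder
  obtain ⟨K, hK⟩ := hbdd
  -- continuity on [0,∞)
  have hcont : ContinuousOn F (Set.Ici 0) := by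
    intro x hx
    rw [Metric.continuousWithinAt_iff]
    intro ε hε
    refine ⟨(ε / (2 * C)) ^ (1 / s), Real.rpow_pos_of_pos (by positivity) _, ?_⟩
    intro y hy hdist
    have hle : |F y - F x| ≤ C * |y - x| ^ s := hH y hy x hx
    have h1 : |y - x| ^ s ≤ ((ε / (2 * C)) ^ (1 / s)) ^ s := by
      apply Real.rpow_le_rpow (abs_nonneg _) _ (le_of_lt hs0)
      rw [Real.dist_eq] at hdist
      exact le_of_lt hdist
    have h2 : ((ε / (2 * C)) ^ (1 / s)) ^ s = ε / (2 * C) := by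
      rw [← Real.rpow_mul (by positivity), one_div, inv_mul_cancel₀ (ne_of_gt hs0),
        Real.rpow_one]
    rw [Real.dist_eq]
    calc |F y - F x| ≤ C * |y - x| ^ s := hle
      _ ≤ C * (ε / (2 * C)) := by
          rw [← h2]; exact mul_le_mul_of_nonneg_left h1 (le_of_lt hC)
      _ = ε / 2 := by field_simp
      _ < ε := by linarith
  -- interval integrability
  have hInt : ∀ x y : ℝ, 0 ≤ x → 0 ≤ y → IntervalIntegrable F volume x y := by
    intro x y hx hy
    apply ContinuousOn.intervalIntegrable
    apply hcont.mono
    intro z hz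
    rcases le_total x y with h | h
    · rw [Set.uIcc_of_le h] at hz; exact le_trans hx hz.1
    · rw [Set.uIcc_of_ge h] at hz; exact le_trans hy hz.1
  set g : ℝ → ℝ := fun t => ∫ u in a..t, F u with hg
  -- monotonicity of g on [a, ∞)
  have hadd : ∀ u v : ℝ, a ≤ u → u ≤ v → g v = g u + ∫ x in u..v, F x := by
    intro u v hu huv
    rw [hg]
    exact (intervalIntegral.integral_add_adjacent_intervals
      (hInt a u ha (le_trans ha hu))
      (hInt u v (le_trans ha hu) (le_trans (le_trans ha hu) huv))).symm
  have hmono : ∀ u v : ℝ, a ≤ u → u ≤ v → g u ≤ g v := by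
    intro u v hu huv
    rw [hadd u v hu huv]
    have : 0 ≤ ∫ x in u..v, F x := by
      apply intervalIntegral.integral_nonneg huv
      intro x hx
      exact hFnonneg x (le_trans (le_trans ha hu) hx.1)
    linarith
  by_cases hB : BddAbove (g '' Set.Ici a)
  · -- bounded integral case: Barbalat-style argument
    set L := sSup (g '' Set.Ici a) with hL
    have hne : (g '' Set.Ici a).Nonempty := ⟨g a, ⟨a, le_refl a, rfl⟩⟩
    have hgle : ∀ t ≥ a, g t ≤ L := fun t ht => le_csSup hB ⟨t, ht, rfl⟩
    rw [Metric.tendsto_atTop]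
    intro ε hε
    set δ : ℝ := (ε / (2 * C)) ^ (1 / s) with hδ
    have hδpos : 0 < δ := Real.rpow_pos_of_pos (by positivity) _
    have hδs : C * δ ^ s = ε / 2 := by
      rw [hδ, ← Real.rpow_mul (by positivity), one_div,
        inv_mul_cancel₀ (ne_of_gt hs0), Real.rpow_one]
      field_simp
    have hηpos : 0 < δ * ε / 4 := by positivity
    obtain ⟨z, hz, hzgt⟩ := exists_lt_of_lt_csSup hne (by linarith : L - δ * ε / 4 < L)
    obtain ⟨t₁, ht₁, rfl⟩ := hz
    refine ⟨max t₁ a, ?_⟩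
    intro t ht
    have hta : a ≤ t := le_trans (le_max_right _ _) ht
    have ht0 : (0:ℝ) ≤ t := le_trans ha hta
    have htt₁ : t₁ ≤ t := le_trans (le_max_left _ _) ht
    rw [Real.dist_eq, sub_zero, abs_of_nonneg (hFnonneg t ht0)]
    by_contra hcon
    push_neg at hcon
    -- F ≥ ε/2 on [t, t+δ]
    have hlower : ∀ x ∈ Set.Icc t (t + δ), ε / 2 ≤ F x := by
      intro x hx
      have hx0 : (0:ℝ) ≤ x := le_trans ht0 hx.1
      have h1 : |F x - F t| ≤ C * |x - t| ^ s := hH x hx0 t ht0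
      have h2 : |x - t| ^ s ≤ δ ^ s := by
        apply Real.rpow_le_rpow (abs_nonneg _) _ (le_of_lt hs0)
        rw [abs_of_nonneg (by linarith [hx.1])]
        linarith [hx.2]
      have h3 : C * |x - t| ^ s ≤ ε / 2 := by
        rw [← hδs]
        exact mul_le_mul_of_nonneg_left h2 (le_of_lt hC)
      have h4 : F t - F x ≤ |F x - F t| := by
        rw [abs_sub_comm]; exact le_abs_self _
      linarith
    have hintlb : δ * (ε / 2) ≤ ∫ x in t..(t + δ), F x := by
      have := intervalIntegral.integral_mono_on (by linarith : t ≤ t + δ)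
        (intervalIntegrable_const (c := ε / 2))
        (hInt t (t + δ) ht0 (by linarith)) hlower
      rwa [intervalIntegral.integral_const, smul_eq_mul, add_sub_cancel_left] at this
    have hup : ∫ x in t..(t + δ), F x ≤ δ * ε / 4 := by
      have h1 : g (t + δ) = g t + ∫ x in t..(t + δ), F x :=
        hadd t (t + δ) hta (by linarith)
      have h2 : g (t + δ) ≤ L := hgle (t + δ) (by linarith)
      have h3 : g t₁ ≤ g t := hmono t₁ t ht₁ htt₁
      linarith
    nlinarith
  · -- unbounded integral case: squeeze F ≤ K * exp (-g)
    have hgtop : Tendsto g atTop atTop := by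
      rw [tendsto_atTop]
      intro b
      rw [not_bddAbove_iff] at hB
      obtain ⟨y, ⟨t₁, ht₁, rfl⟩, hby⟩ := hB b
      rw [eventually_atTop]
      exact ⟨t₁, fun t ht => le_of_lt (lt_of_lt_of_le hby (hmono t₁ t ht₁ ht))⟩
    have hexp : Tendsto (fun t => K * Real.exp (-(g t))) atTop (nhds 0) := by
      have h1 : Tendsto (fun t => Real.exp (-(g t))) atTop (nhds 0) :=
        Real.tendsto_exp_atBot.comp (tendsto_neg_atBot_iff.mpr hgtop)
      have := h1.const_mul K
      simpa using this
    apply tendsto_of_tendsto_of_tendsto_of_le_of_le' tendsto_const_nhds hexp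
    · filter_upwards [eventually_ge_atTop (0:ℝ)] with t ht
      exact hFnonneg t ht
    · filter_upwards [eventually_ge_atTop a] with t ht
      have h1 : F t * Real.exp (g t) ≤ K := hK t ht
      have h2 : (0:ℝ) < Real.exp (g t) := Real.exp_pos _
      rw [Real.exp_neg]
      rw [← le_div_iff₀ h2] at h1
      rwa [div_eq_mul_inv] at h1
end

section
/- Let $c:[0,\infty)\to[0,\infty)$ be a continuous function satisfying $c(t_0+t)\le c(t_0)e^{-\beta\int_{t_0}^{t_0+t}c(s)\,ds}$ for all $t,t_0\ge 0$, where $\beta>0$. Then $c(t)\to 0$ as $t\to\infty$. -/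
open Filter MeasureTheory

/-- A continuous nonnegative function `c` on `[0,∞)` satisfying
`c(t₀+t) ≤ c(t₀) * exp(-β ∫_{t₀}^{t₀+t} c)` for all `t, t₀ ≥ 0` (with `β > 0`)
tends to `0` at infinity. -/
theorem tendsto_zero_of_exp_integral_bound
    (c : ℝ → ℝ) (β : ℝ) (hβ : 0 < β)
    (hcont : ContinuousOn c (Set.Ici 0))
    (hnonneg : ∀ t ≥ (0:ℝ), 0 ≤ c t)
    (hineq : ∀ t₀ ≥ (0:ℝ), ∀ t ≥ (0:ℝ),
      c (t₀ + t) ≤ c t₀ * Real.exp (-β * ∫ s in t₀..(t₀ + t), c s)) :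
    Tendsto c atTop (nhds 0) := by
  -- c is nonincreasing on [0,∞)
  have hmono : ∀ a ≥ (0:ℝ), ∀ b, a ≤ b → c b ≤ c a := by
    intro a ha b hab
    have ht : (0:ℝ) ≤ b - a := sub_nonneg.2 hab
    have h1 := hineq a ha (b - a) ht
    rw [add_sub_cancel] at h1
    have hintnn : 0 ≤ ∫ s in a..b, c s :=
      intervalIntegral.integral_nonneg hab (fun u hu => hnonneg u (le_trans ha hu.1))
    have hexp : Real.exp (-β * ∫ s in a..b, c s) ≤ 1 := by
      apply Real.exp_le_one_iff.2
      have : 0 ≤ β * ∫ s in a..b, c s := mul_nonneg hβ.le hintnn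
      linarith
    calc c b ≤ c a * Real.exp (-β * ∫ s in a..b, c s) := h1
      _ ≤ c a * 1 := mul_le_mul_of_nonneg_left hexp (hnonneg a ha)
      _ = c a := mul_one _
  rw [Metric.tendsto_atTop]
  intro ε hε
  -- there is T ≥ 0 with c T < ε
  have key : ∃ T ≥ (0:ℝ), c T < ε := by
    by_contra hcon
    push_neg at hcon
    have hc0 := hnonneg 0 le_rfl
    -- the bound tends to 0
    have htend : Tendsto (fun t : ℝ => c 0 * Real.exp (-(β * ε) * t)) atTop (nhds 0) := by
      have h1 : Tendsto (fun t : ℝ => -(β * ε) * t) atTop atBot := by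
        apply tendsto_id.const_mul_atTop_of_neg
        have := mul_pos hβ hε
        linarith
      have := (Real.tendsto_exp_atBot.comp h1).const_mul (c 0)
      simpa using this
    have hev : ∀ᶠ t in atTop, c 0 * Real.exp (-(β * ε) * t) < ε := by
      have := htend.eventually (eventually_lt_nhds hε)  -- eventually < ε
      exact this
    obtain ⟨t, hlt, ht0⟩ := ((hev.and (eventually_ge_atTop (0:ℝ))).exists)
    -- lower bound on the integral
    have hint : IntervalIntegrable c volume 0 t := by
      apply ContinuousOn.intervalIntegrable
      apply hcont.mono
      rw [Set.uIcc_of_le ht0]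
      exact Set.Icc_subset_Ici_self
    have hεt : ε * t ≤ ∫ s in (0:ℝ)..t, c s := by
      have := intervalIntegral.integral_mono_on ht0 intervalIntegrable_const hint
        (fun u hu => hcon u hu.1)
      simpa [mul_comm] using this
    have h2 := hineq 0 le_rfl t ht0
    rw [zero_add] at h2
    have h3 : c 0 * Real.exp (-β * ∫ s in (0:ℝ)..t, c s)
        ≤ c 0 * Real.exp (-(β * ε) * t) := by
      apply mul_le_mul_of_nonneg_left _ hc0
      apply Real.exp_le_exp.2
      have : β * (ε * t) ≤ β * ∫ s in (0:ℝ)..t, c s := by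
        exact mul_le_mul_of_nonneg_left hεt hβ.le
      nlinarith
    have := hcon t ht0
    linarith
  obtain ⟨T, hT0, hTε⟩ := key
  refine ⟨T, fun n hn => ?_⟩
  have h1 : c n ≤ c T := hmono T hT0 n hn
  have h2 : 0 ≤ c n := hnonneg n (le_trans hT0 hn)
  rw [Real.dist_eq, sub_zero, abs_of_nonneg h2]
  linarith
end

section
/- Let $N>0$ and positive vectors $\alpha, r\in\mathbb{R}^n$ with $\sum_j\alpha_j = 1$, $N > \min_j(r_j/\alpha_j)$, $N < \sum_j r_j$ (in particular $n\ge 2$), and $r$ not a scalar multiple of $\alpha$. Then there exists a unique $l^\infty \in \big(\min_j(r_j/\alpha_j)/N,\ \max_j(r_j/\alpha_j)/N\big)$ satisfying $N = \sum_{j=1}^n \min\{l^\infty N\alpha_j,\ r_j\}$. -/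
/-- If `N > min_j(r_j/α_j)`, `N < ∑ r_j`, and `r` is not a multiple of `α`,
then there is a unique `l^∞` in the open interval
`(min_j(r_j/α_j)/N, max_j(r_j/α_j)/N)` with `N = ∑ j, min(l^∞ N α_j, r_j)`. -/
theorem unique_linfty {n : ℕ} (hn : 0 < n)
    (N : ℝ) (hN : 0 < N)
    (α r : Fin n → ℝ) (hα : ∀ j, 0 < α j) (hr : ∀ j, 0 < r j)
    (hsum : ∑ j, α j = 1)
    (hNmin : (Finset.univ.inf' ⟨⟨0, hn⟩, Finset.mem_univ _⟩ fun j => r j / α j) < N)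
    (hNsum : N < ∑ j, r j)
    (hnotmul : ¬ ∃ c : ℝ, ∀ j, r j = c * α j) :
    ∃! l : ℝ,
      l ∈ Set.Ioo
        ((Finset.univ.inf' ⟨⟨0, hn⟩, Finset.mem_univ _⟩ fun j => r j / α j) / N)
        ((Finset.univ.sup' ⟨⟨0, hn⟩, Finset.mem_univ _⟩ fun j => r j / α j) / N) ∧
      N = ∑ j, min (l * N * α j) (r j) := by
  have hne : (Finset.univ : Finset (Fin n)).Nonempty := ⟨⟨0, hn⟩, Finset.mem_univ _⟩
  set m := Finset.univ.inf' ⟨⟨0, hn⟩, Finset.mem_univ _⟩ fun j => r j / α j with hm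
  set M := Finset.univ.sup' ⟨⟨0, hn⟩, Finset.mem_univ _⟩ fun j => r j / α j with hM
  set f : ℝ → ℝ := fun l => ∑ j, min (l * N * α j) (r j) with hf
  have hcont : Continuous f := by
    apply continuous_finset_sum
    intro j _
    exact Continuous.min (by continuity) continuous_const
  -- m ≤ each ratio ≤ M
  have hm_le : ∀ j, m ≤ r j / α j := fun j =>
    Finset.inf'_le (fun j => r j / α j) (Finset.mem_univ j)
  have hle_M : ∀ j, r j / α j ≤ M := fun j =>
    Finset.le_sup' (fun j => r j / α j) (Finset.mem_univ j)
  have hmM : m < M := by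
    by_contra h
    push_neg at h
    apply hnotmul
    refine ⟨m, fun j => ?_⟩
    have h1 : r j / α j = m := le_antisymm (le_trans (hle_M j) h) (hm_le j)
    rw [div_eq_iff (hα j).ne'] at h1
    exact h1
  -- strict monotonicity below M/N
  have hmono : ∀ l1 l2 : ℝ, l1 < l2 → l1 < M / N → f l1 < f l2 := by
    intro l1 l2 h12 hl1
    obtain ⟨j0, _, hj0⟩ := Finset.exists_mem_eq_sup' hne fun j => r j / α j
    have hlt : l1 * N * α j0 < r j0 := by
      have h1 : l1 * N < M := (lt_div_iff₀ hN).mp hl1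
      have hMeq : M = r j0 / α j0 := hj0
      rw [hMeq] at h1
      calc l1 * N * α j0 < (r j0 / α j0) * α j0 := by
            exact mul_lt_mul_of_pos_right h1 (hα j0)
        _ = r j0 := div_mul_cancel₀ (r j0) (hα j0).ne'
    apply Finset.sum_lt_sum
    · intro i _
      apply min_le_min _ le_rfl
      have := mul_le_mul_of_nonneg_right (le_of_lt h12) (le_of_lt hN)
      exact mul_le_mul_of_nonneg_right this (le_of_lt (hα i))
    · refine ⟨j0, Finset.mem_univ _, ?_⟩
      rw [min_eq_left hlt.le]
      apply lt_min _ hlt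
      have := mul_lt_mul_of_pos_right h12 hN
      exact mul_lt_mul_of_pos_right this (hα j0)
  -- f (m/N) < N
  have hfa : f (m / N) < N := by
    have heq : ∀ j, m / N * N * α j = m * α j := by
      intro j; field_simp
    have h1 : f (m / N) ≤ ∑ j, m * α j := by
      apply Finset.sum_le_sum
      intro j _
      rw [heq j]
      exact min_le_left _ _
    have h2 : ∑ j, m * α j = m := by
      rw [← Finset.mul_sum, hsum, mul_one]
    exact lt_of_le_of_lt (h1.trans_eq h2) hNmin
  -- f (M/N) > N
  have hfb : N < f (M / N) := by
    have heq : f (M / N) = ∑ j, r j := by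
      apply Finset.sum_congr rfl
      intro j _
      apply min_eq_right
      have h1 : M / N * N * α j = M * α j := by field_simp
      rw [h1]
      have := hle_M j
      calc r j = (r j / α j) * α j := (div_mul_cancel₀ (r j) (hα j).ne').symm
        _ ≤ M * α j := mul_le_mul_of_nonneg_right this (le_of_lt (hα j))
    rw [heq]; exact hNsum
  have hab : m / N ≤ M / N := by gcongr
  -- existence via IVT
  have hIVT := intermediate_value_Ioo (f := f) hab hcont.continuousOn
  have hNmem : N ∈ Set.Ioo (f (m / N)) (f (M / N)) := ⟨hfa, hfb⟩
  obtain ⟨l, hlmem, hfl⟩ := hIVT hNmem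
  refine ⟨l, ⟨hlmem, hfl.symm⟩, ?_⟩
  rintro y ⟨hymem, hfy⟩
  by_contra hne'
  have hfy' : f y = N := hfy.symm
  rcases lt_or_gt_of_ne hne' with h | h
  · have := hmono y l h (hymem.2)
    rw [hfy', hfl] at this
    exact lt_irrefl _ this
  · have := hmono l y h (hlmem.2)
    rw [hfy', hfl] at this
    exact lt_irrefl _ this
end

section
/- Let $d_S,d_I>0$, let $\mathcal{L}$ be quasi-positive, irreducible, with columns summing to zero, and let $\alpha$ be its positive null vector normalized by $\sum_j\alpha_j=1$. Suppose $(S,I)\in\mathbb{R}^n_{>0}\times\mathbb{R}^n_{>0}$ is an equilibrium of the patch SIS system, i.e. $d_S\mathcal{L}S - \beta\circ S\circ I + \gamma\circ I = 0$ and $d_I\mathcal{L}I + \beta\circ S\circ I - \gamma\circ I = 0$, with $\sum_j(S_j+I_j)=N$. Then there exists $\kappa^*>0$ with $d_S S + d_I I = \kappa^* N\alpha$, and moreover $\kappa^* N = d_S N + (d_I - d_S)\sum_j I_j$. -/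
/-- A square matrix is irreducible if for every nonempty proper coordinate subset `s`
there is a nonzero entry `L i j` with `j ∈ s` and `i ∉ s`. -/
def Matrix.IsIrreducible' {n : ℕ} (L : Matrix (Fin n) (Fin n) ℝ) : Prop :=
  ∀ s : Finset (Fin n), s.Nonempty → s ≠ Finset.univ →
    ∃ i ∉ s, ∃ j ∈ s, L i j ≠ 0

/-!
Adding the two equilibrium equations kills the infection terms, so `v = d_S S + d_I I` lies in
the kernel of `L`. For a quasi-positive irreducible `L` with a positive null vector `α`, that kernel
is the line through `α`: if `m = min_j v_j / α_j`, then `w = v - m α` is a nonnegative null vector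
vanishing somewhere, and irreducibility propagates the zero to every coordinate. Summing `v = m α`
with `∑ α = 1` identifies `m = κ N`.
-/

namespace Matrix

section Kernel

variable {n : ℕ} {L : Matrix (Fin n) (Fin n) ℝ}

theorem eq_zero_of_mulVec_eq_zero_of_nonneg (hquasi : ∀ i j, i ≠ j → 0 ≤ L i j)
    (hirr : L.IsIrreducible') {w : Fin n → ℝ} (hw : 0 ≤ w) (hLw : L *ᵥ w = 0)
    {j₀ : Fin n} (hj₀ : w j₀ = 0) : w = 0 := by
  by_contra hne
  set t := Finset.univ.filter fun j => 0 < w j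
  have ht : t.Nonempty := by
    obtain ⟨k, hk⟩ := Function.ne_iff.mp hne
    exact ⟨k, Finset.mem_filter.mpr ⟨Finset.mem_univ k, (hw k).lt_of_ne' hk⟩⟩
  have hj₀t : j₀ ∉ t := by simp [t, hj₀]
  obtain ⟨i, hit, j, hjt, hLij⟩ := hirr t ht fun h => hj₀t (h ▸ Finset.mem_univ j₀)
  have hwi : w i = 0 := (hw i).antisymm' (by simpa [t] using hit)
  have hterm : ∀ k ∈ Finset.univ, 0 ≤ L i k * w k := fun k _ => by
    rcases eq_or_ne i k with rfl | hik
    · simp [hwi]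
    · exact mul_nonneg (hquasi i k hik) (hw k)
  have hrow : ∑ k, L i k * w k = 0 := congrFun hLw i
  have hzero := (Finset.sum_eq_zero_iff_of_nonneg hterm).mp hrow j (Finset.mem_univ j)
  exact (mul_ne_zero hLij (Finset.mem_filter.mp hjt).2.ne') hzero

theorem exists_eq_smul_of_mulVec_eq_zero (hquasi : ∀ i j, i ≠ j → 0 ≤ L i j)
    (hirr : L.IsIrreducible') {α : Fin n → ℝ} (hα0 : L *ᵥ α = 0) (hαpos : ∀ j, 0 < α j)
    {v : Fin n → ℝ} (hv0 : L *ᵥ v = 0) : ∃ c : ℝ, v = c • α := by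
  rcases isEmpty_or_nonempty (Fin n) with hn | hn
  · exact ⟨0, Subsingleton.elim _ _⟩
  obtain ⟨j₀, -, hmin⟩ := Finset.univ.exists_min_image (fun j => v j / α j) Finset.univ_nonempty
  set m := v j₀ / α j₀
  have hw : 0 ≤ v - m • α := fun j => by
    simpa [sub_nonneg] using (le_div_iff₀ (hαpos j)).mp (hmin j (Finset.mem_univ j))
  have hwj₀ : (v - m • α) j₀ = 0 := by
    simp [m, div_mul_cancel₀ _ (hαpos j₀).ne']
  have hLw : L *ᵥ (v - m • α) = 0 := by
    rw [mulVec_sub, mulVec_smul, hv0, hα0, smul_zero, sub_zero]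
  exact ⟨m, sub_eq_zero.mp (eq_zero_of_mulVec_eq_zero_of_nonneg hquasi hirr hw hLw hwj₀)⟩

end Kernel

end Matrix

theorem equilibrium_kappa_general {n : ℕ}
    (L : Matrix (Fin n) (Fin n) ℝ)
    (hquasi : ∀ i j, i ≠ j → 0 ≤ L i j)
    (hirr : L.IsIrreducible')
    (α : Fin n → ℝ) (hα0 : L.mulVec α = 0) (hαpos : ∀ j, 0 < α j)
    (hαsum : ∑ j, α j = 1)
    (dS dI N : ℝ) (hdS : 0 < dS) (hdI : 0 < dI) (hN : 0 < N)
    (β γ S I : Fin n → ℝ)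
    (hSpos : ∀ j, 0 < S j) (hIpos : ∀ j, 0 < I j)
    (heqS : ∀ i, dS * (∑ j, L i j * S j) - β i * S i * I i + γ i * I i = 0)
    (heqI : ∀ i, dI * (∑ j, L i j * I j) + β i * S i * I i - γ i * I i = 0)
    (htot : ∑ j, (S j + I j) = N) :
    ∃ κ : ℝ, 0 < κ ∧ (∀ j, dS * S j + dI * I j = κ * N * α j) ∧
      κ * N = dS * N + (dI - dS) * ∑ j, I j := by
  set v := dS • S + dI • I
  have hLv : L.mulVec v = 0 := funext fun i => by
    rw [Matrix.mulVec_add, Matrix.mulVec_smul, Matrix.mulVec_smul]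
    simp only [Pi.add_apply, Pi.smul_apply, smul_eq_mul, Pi.zero_apply, Matrix.mulVec,
      dotProduct]
    linarith [heqS i, heqI i]
  obtain ⟨c, hc⟩ := Matrix.exists_eq_smul_of_mulVec_eq_zero hquasi hirr hα0 hαpos hLv
  have hsum_v : ∑ j, v j = c := by
    simp [hc, ← Finset.mul_sum, hαsum]
  have hc_pos : 0 < c := by
    have hne : (Finset.univ : Finset (Fin n)).Nonempty :=
      Finset.nonempty_of_sum_ne_zero (htot.trans_ne hN.ne')
    have hv_pos : ∀ j, 0 < v j := fun j =>
      add_pos (mul_pos hdS (hSpos j)) (mul_pos hdI (hIpos j))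
    exact hsum_v ▸ Finset.sum_pos (fun j _ => hv_pos j) hne
  have hc_eq : c = dS * N + (dI - dS) * ∑ j, I j := by
    rw [← hsum_v, ← htot]
    simp only [v, Pi.add_apply, Pi.smul_apply, smul_eq_mul, Finset.sum_add_distrib,
      ← Finset.mul_sum]
    ring
  refine ⟨c / N, div_pos hc_pos hN, fun j => ?_, ?_⟩ <;> rw [div_mul_cancel₀ c hN.ne']
  · simpa [v] using congrFun hc j
  · exact hc_eq

/-- For a positive endemic equilibrium `(S, I)` of the patch SIS system,
the combination `d_S S + d_I I` is a positive multiple `κ* N α` of the Perron vector,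
with `κ* N = d_S N + (d_I - d_S) ∑ I_j`. -/
theorem equilibrium_kappa {n : ℕ}
    (L : Matrix (Fin n) (Fin n) ℝ)
    (hquasi : ∀ i j, i ≠ j → 0 ≤ L i j)
    (hirr : L.IsIrreducible')
    (hcol : ∀ j, ∑ i, L i j = 0)
    (α : Fin n → ℝ) (hα0 : L.mulVec α = 0) (hαpos : ∀ j, 0 < α j)
    (hαsum : ∑ j, α j = 1)
    (dS dI N : ℝ) (hdS : 0 < dS) (hdI : 0 < dI) (hN : 0 < N)
    (β γ S I : Fin n → ℝ)
    (hβ : ∀ j, 0 < β j) (hγ : ∀ j, 0 < γ j)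
    (hSpos : ∀ j, 0 < S j) (hIpos : ∀ j, 0 < I j)
    (heqS : ∀ i, dS * (∑ j, L i j * S j) - β i * S i * I i + γ i * I i = 0)
    (heqI : ∀ i, dI * (∑ j, L i j * I j) + β i * S i * I i - γ i * I i = 0)
    (htot : ∑ j, (S j + I j) = N) :
    ∃ κ : ℝ, 0 < κ ∧ (∀ j, dS * S j + dI * I j = κ * N * α j) ∧
      κ * N = dS * N + (dI - dS) * ∑ j, I j :=
  equilibrium_kappa_general L hquasi hirr α hα0 hαpos hαsum dS dI N hdS hdI hN β γ S I hSpos hIpos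
    heqS heqI htot
end

section
/- Let $\sigma>0$, $N>0$, $\alpha,r\in\mathbb{R}^n_{>0}$ with $\sum_j\alpha_j=1$ and $N > \sum_j r_j$. Let $l^\sigma$ be the unique positive solution of $N = \sum_j[\min\{l N\alpha_j, r_j\} + \tfrac{1}{\sigma}(lN\alpha_j - r_j)_+]$. Then for all sufficiently large $\sigma$, $l^\sigma = \frac{\sigma(N-\sum_j r_j) + \sum_j r_j}{N}$; consequently, as $\sigma\to\infty$, $\min\{l^\sigma N\alpha_j, r_j\}\to r_j$ and $\tfrac{1}{\sigma}(l^\sigma N\alpha_j - r_j)_+ \to (N-\sum_i r_i)\alpha_j$ for each $j$. -/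
open Filter

/-!
Write `x = l N`. Each summand `min (x α_j) r_j + σ⁻¹ (x α_j - r_j)_+` is strictly increasing in `x`,
so the defining equation has at most one solution. The candidate `x(σ) = σ (N - ∑ r) + ∑ r` grows
linearly in `σ`, so for large `σ` every `x(σ) α_j` exceeds `r_j`; in that regime the equation
reads `N = ∑ r + σ⁻¹ (x - ∑ r)`, which `x(σ)` solves. Hence `l σ N = x(σ)` eventually, and both
limits are read off the explicit formula.
-/

lemma strictMono_min_add_mul_max (r : ℝ) {c : ℝ} (hc : 0 < c) :
    StrictMono fun x : ℝ => min x r + c * max (x - r) 0 := by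
  intro x y hxy
  rcases lt_or_ge x r with hx | hx <;> rcases le_total y r with hy | hy
  all_goals
    simp only [min_eq_left, min_eq_right, max_eq_left, max_eq_right, le_of_lt, hx, hy, sub_nonneg,
      sub_nonpos]
    nlinarith

lemma strictMono_sum_min_add_mul_max {ι : Type*} [Fintype ι] [Nonempty ι] {a : ι → ℝ}
    (ha : ∀ j, 0 < a j) (r : ι → ℝ) {c : ℝ} (hc : 0 < c) :
    StrictMono fun x : ℝ => ∑ j, (min (x * a j) (r j) + c * max (x * a j - r j) 0) :=
  fun _ _ hxy => Finset.sum_lt_sum_of_nonempty Finset.univ_nonempty fun j _ =>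
    strictMono_min_add_mul_max (r j) hc (mul_lt_mul_of_pos_right hxy (ha j))

lemma sum_min_add_mul_max_of_le {ι : Type*} [Fintype ι] {a r : ι → ℝ} (ha : ∑ j, a j = 1)
    {x : ℝ} (hx : ∀ j, r j ≤ x * a j) (c : ℝ) :
    ∑ j, (min (x * a j) (r j) + c * max (x * a j - r j) 0) = ∑ j, r j + c * (x - ∑ j, r j) := by
  have hterm : ∀ j, min (x * a j) (r j) + c * max (x * a j - r j) 0 = r j + c * (x * a j - r j) :=
    fun j => by rw [min_eq_right (hx j), max_eq_left (sub_nonneg.2 (hx j))]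
  simp only [hterm, Finset.sum_add_distrib, ← Finset.mul_sum, Finset.sum_sub_distrib, ha, mul_one]

lemma tendsto_inv_mul_affine (a b d : ℝ) :
    Tendsto (fun σ : ℝ => σ⁻¹ * ((σ * a + b) - d)) atTop (nhds a) := by
  have hlim : Tendsto (fun σ : ℝ => a + σ⁻¹ * (b - d)) atTop (nhds (a + 0 * (b - d))) :=
    tendsto_const_nhds.add (tendsto_inv_atTop_zero.mul_const _)
  rw [zero_mul, add_zero] at hlim
  refine hlim.congr' ?_
  filter_upwards [eventually_ne_atTop 0] with σ hσ
  field_simp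
  ring

theorem lsigma_large_sigma_general {n : ℕ}
    (N : ℝ) (hN : 0 < N)
    (α r : Fin n → ℝ) (hα : ∀ j, 0 < α j)
    (hsum : ∑ j, α j = 1)
    (hNbig : (∑ j, r j) < N)
    (l : ℝ → ℝ)
    (hl : ∀ σ > (0:ℝ), 0 < l σ ∧
      N = ∑ j, (min (l σ * N * α j) (r j) + σ⁻¹ * max (l σ * N * α j - r j) 0)) :
    (∃ σ₀ > (0:ℝ), ∀ σ ≥ σ₀, l σ = (σ * (N - ∑ j, r j) + ∑ j, r j) / N) ∧
    (∀ j, Tendsto (fun σ => min (l σ * N * α j) (r j)) atTop (nhds (r j))) ∧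
    (∀ j, Tendsto (fun σ => σ⁻¹ * max (l σ * N * α j - r j) 0) atTop
      (nhds ((N - ∑ i, r i) * α j))) := by
  set S := ∑ j, r j
  have : Nonempty (Fin n) := by
    by_contra h
    simp [not_nonempty_iff.1 h] at hsum
  set x : ℝ → ℝ := fun σ => σ * (N - S) + S with hx
  have hx_large : ∀ᶠ σ in atTop, ∀ j, r j ≤ x σ * α j := by
    have hx_tendsto : Tendsto x atTop atTop :=
      tendsto_atTop_add_const_right _ S (tendsto_id.atTop_mul_const (sub_pos.2 hNbig))
    exact eventually_all.2 fun j =>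
      (hx_tendsto.atTop_mul_const (hα j)).eventually_ge_atTop (r j)
  have hl_eq : ∀ᶠ σ in atTop, l σ * N = x σ := by
    filter_upwards [hx_large, eventually_gt_atTop 0] with σ hσ hσpos
    refine (strictMono_sum_min_add_mul_max hα r (inv_pos.2 hσpos)).injective ?_
    rw [← (hl σ hσpos).2, sum_min_add_mul_max_of_le hsum hσ]
    field_simp
    ring
  refine ⟨?_, fun j => ?_, fun j => ?_⟩
  · obtain ⟨σ₀, hσ₀⟩ := eventually_atTop.1 hl_eq
    refine ⟨max σ₀ 1, by positivity, fun σ hσ => ?_⟩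
    rw [eq_div_iff hN.ne']
    exact hσ₀ σ (le_of_max_le_left hσ)
  · refine tendsto_const_nhds.congr' ?_
    filter_upwards [hl_eq, hx_large] with σ hσ hσ_large
    rw [hσ, min_eq_right (hσ_large j)]
  · refine (tendsto_inv_mul_affine ((N - S) * α j) (S * α j) (r j)).congr' ?_
    filter_upwards [hl_eq, hx_large] with σ hσ hσ_large
    rw [hσ, max_eq_left (sub_nonneg.2 (hσ_large j)), hx]
    ring

/-- If `N > ∑ r_j` and `l^σ` is the positive solution of
`N = ∑_j [min(lNα_j, r_j) + (1/σ)(lNα_j - r_j)_+]`, then for sufficiently large `σ` one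
has `l^σ = (σ(N - ∑ r_j) + ∑ r_j)/N`, and as `σ → ∞`, `min(l^σ N α_j, r_j) → r_j` and
`(1/σ)(l^σ N α_j - r_j)_+ → (N - ∑ r_i) α_j` for each `j`. -/
theorem lsigma_large_sigma {n : ℕ}
    (N : ℝ) (hN : 0 < N)
    (α r : Fin n → ℝ) (hα : ∀ j, 0 < α j) (hr : ∀ j, 0 < r j)
    (hsum : ∑ j, α j = 1)
    (hNbig : (∑ j, r j) < N)
    (l : ℝ → ℝ)
    (hl : ∀ σ > (0:ℝ), 0 < l σ ∧
      N = ∑ j, (min (l σ * N * α j) (r j) + σ⁻¹ * max (l σ * N * α j - r j) 0)) :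
    (∃ σ₀ > (0:ℝ), ∀ σ ≥ σ₀, l σ = (σ * (N - ∑ j, r j) + ∑ j, r j) / N) ∧
    (∀ j, Tendsto (fun σ => min (l σ * N * α j) (r j)) atTop (nhds (r j))) ∧
    (∀ j, Tendsto (fun σ => σ⁻¹ * max (l σ * N * α j - r j) 0) atTop
      (nhds ((N - ∑ i, r i) * α j))) :=
  lsigma_large_sigma_general N hN α r hα hsum hNbig l hl
end

section
/- Let $\sigma>0$, $N>(\mathbf{r}/\alpha)_m := \min_j(r_j/\alpha_j)$, $\alpha,r\in\mathbb{R}^n_{>0}$, $\sum_j\alpha_j=1$, and let $l^\sigma>0$ be the unique solution of $N=G_\sigma(l^\sigma)$ with $G_\sigma(l)=\sum_j[\min\{lN\alpha_j,r_j\}+\tfrac1\sigma(lN\alpha_j-r_j)_+]$. Then $l^\sigma \to \min_j(r_j/\alpha_j)/N$ as $\sigma\to 0^+$. -/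
open Filter

/-- If `N > min_j(r_j/α_j)` and `l^σ` is the positive solution of
`N = G_σ(l^σ)`, then `l^σ → min_j(r_j/α_j)/N` as `σ → 0⁺`. -/
theorem lsigma_small_sigma {n : ℕ} (hn : 0 < n)
    (N : ℝ) (hN : 0 < N)
    (α r : Fin n → ℝ) (hα : ∀ j, 0 < α j) (hr : ∀ j, 0 < r j)
    (hsum : ∑ j, α j = 1)
    (hNbig : (Finset.univ.inf' ⟨⟨0, hn⟩, Finset.mem_univ _⟩ fun j => r j / α j) < N)
    (l : ℝ → ℝ)
    (hl : ∀ σ > (0:ℝ), 0 < l σ ∧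
      N = ∑ j, (min (l σ * N * α j) (r j) + σ⁻¹ * max (l σ * N * α j - r j) 0)) :
    Tendsto l (nhdsWithin 0 (Set.Ioi 0))
      (nhds ((Finset.univ.inf' ⟨⟨0, hn⟩, Finset.mem_univ _⟩ fun j => r j / α j) / N)) := by
  set m := Finset.univ.inf' ⟨⟨0, hn⟩, Finset.mem_univ _⟩ (fun j => r j / α j) with hm
  obtain ⟨j0, -, hj0⟩ := Finset.exists_mem_eq_inf' (⟨⟨0, hn⟩, Finset.mem_univ _⟩ :
    (Finset.univ : Finset (Fin n)).Nonempty) (fun j => r j / α j)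
  have hmle : ∀ j, m ≤ r j / α j := fun j => Finset.inf'_le _ (Finset.mem_univ j)
  -- lower bound
  have hlow : ∀ σ > (0:ℝ), m / N ≤ l σ := by
    intro σ hσ
    obtain ⟨hlpos, heq⟩ := hl σ hσ
    by_contra h
    push_neg at h
    have hlN : l σ * N < m := (lt_div_iff₀ hN).mp h
    have hkey : ∀ j, l σ * N * α j < r j := by
      intro j
      calc l σ * N * α j < m * α j := mul_lt_mul_of_pos_right hlN (hα j)
        _ ≤ r j := by
            rw [← le_div_iff₀ (hα j)]
            exact hmle j
    have hsum2 : N = l σ * N := by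
      have h1 : ∀ j, min (l σ * N * α j) (r j) + σ⁻¹ * max (l σ * N * α j - r j) 0
          = l σ * N * α j := by
        intro j
        rw [min_eq_left (hkey j).le, max_eq_right (by linarith [hkey j]), mul_zero, add_zero]
      calc N = ∑ j, (min (l σ * N * α j) (r j) + σ⁻¹ * max (l σ * N * α j - r j) 0) := heq
        _ = ∑ j, l σ * N * α j := by simp_rw [h1]
        _ = l σ * N := by rw [← Finset.mul_sum, hsum, mul_one]
    have : N < N := by
      calc N = l σ * N := hsum2
        _ < m / N * N := mul_lt_mul_of_pos_right h hN
        _ = m := div_mul_cancel₀ _ hN.ne'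
        _ < N := hNbig
    exact lt_irrefl _ this
  -- upper bound
  have hup : ∀ σ > (0:ℝ), l σ ≤ m / N + σ / α j0 := by
    intro σ hσ
    obtain ⟨hlpos, heq⟩ := hl σ hσ
    have hterm : ∀ j, 0 ≤ min (l σ * N * α j) (r j) + σ⁻¹ * max (l σ * N * α j - r j) 0 := by
      intro j
      have h1 : (0:ℝ) ≤ min (l σ * N * α j) (r j) :=
        le_min (mul_nonneg (mul_nonneg hlpos.le hN.le) (hα j).le) (hr j).le
      have h2 : (0:ℝ) ≤ σ⁻¹ * max (l σ * N * α j - r j) 0 := by positivity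
      linarith
    have h1 : min (l σ * N * α j0) (r j0) + σ⁻¹ * max (l σ * N * α j0 - r j0) 0 ≤ N := by
      calc min (l σ * N * α j0) (r j0) + σ⁻¹ * max (l σ * N * α j0 - r j0) 0
          ≤ ∑ j, (min (l σ * N * α j) (r j) + σ⁻¹ * max (l σ * N * α j - r j) 0) :=
            Finset.single_le_sum (fun j _ => hterm j) (Finset.mem_univ j0)
        _ = N := heq.symm
    have hmin0 : (0:ℝ) ≤ min (l σ * N * α j0) (r j0) :=
      le_min (mul_nonneg (mul_nonneg hlpos.le hN.le) (hα j0).le) (hr j0).le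
    have h2 : σ⁻¹ * max (l σ * N * α j0 - r j0) 0 ≤ N := by linarith
    have h4 : max (l σ * N * α j0 - r j0) 0 ≤ σ * N := by
      rwa [inv_mul_le_iff₀ hσ] at h2
    have h3 : l σ * N * α j0 - r j0 ≤ σ * N :=
      le_trans (le_max_left _ _) h4
    have heqd : m / N + σ / α j0 = (r j0 + σ * N) / (N * α j0) := by
      rw [hm, hj0]
      field_simp [hN.ne', (hα j0).ne']
    rw [heqd, le_div_iff₀ (mul_pos hN (hα j0))]
    nlinarith
  -- squeeze
  have hub : Tendsto (fun σ => m / N + σ / α j0) (nhdsWithin 0 (Set.Ioi 0)) (nhds (m / N)) := by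
    have h : Tendsto (fun σ : ℝ => m / N + σ / α j0) (nhds 0) (nhds (m / N + 0 / α j0)) :=
      (continuous_const.add (continuous_id.div_const _)).tendsto 0
    simpa using h.mono_left nhdsWithin_le_nhds
  exact tendsto_of_tendsto_of_tendsto_of_le_of_le' tendsto_const_nhds hub
    (eventually_nhdsWithin_of_forall fun σ hσ => hlow σ hσ)
    (eventually_nhdsWithin_of_forall fun σ hσ => hup σ hσ)
end

section
/- Let $\mathcal{L}$ be an $n\times n$ quasi-positive irreducible matrix with zero column sums, $\alpha$ its positive normalized null vector, $d_I>0$, and $\beta,\gamma\in\mathbb{R}^n_{>0}$, $N>0$, $l>0$. If $U\in\mathbb{R}^n_{>0}$ satisfies $d_I\mathcal{L}U + (l\beta\circ(N\alpha - d_I U) - \gamma)\circ U = 0$, then $d_I U_j < N\alpha_j$ for every $j$. -/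
/-- A square matrix is irreducible if for every nonempty proper coordinate subset `s`
there is a nonzero entry `L i j` with `j ∈ s` and `i ∉ s`. -/
def Matrix.IsIrreducibleOfCoords {n : ℕ} (L : Matrix (Fin n) (Fin n) ℝ) : Prop :=
  ∀ s : Finset (Fin n), s.Nonempty → s ≠ Finset.univ →
    ∃ i ∉ s, ∃ j ∈ s, L i j ≠ 0

/-!
Put `V := N α - d_I U`. Since `L α = 0`, the equation says `(L V)_i = (l β_i V_i - γ_i) U_i`,
which is negative wherever `V_i ≤ 0`. For a quasi-positive `L` with zero column sums, however,
`L V` has a nonnegative sum over the set `{V ≤ 0}`: summing a column `j` over `s` gives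
a nonpositive number for `j ∈ s` (minus an off-diagonal sum over the complement) and a
nonnegative one for `j ∉ s`. Hence `{V ≤ 0}` is empty.
-/

namespace Matrix

variable {ι R : Type*} [Fintype ι]

theorem sum_mulVec_eq_sum_colSum_mul [NonUnitalNonAssocSemiring R] (L : Matrix ι ι R)
    (s : Finset ι) (V : ι → R) :
    ∑ i ∈ s, (L *ᵥ V) i = ∑ j, (∑ i ∈ s, L i j) * V j := by
  simp only [mulVec, dotProduct, Finset.sum_mul]
  exact Finset.sum_comm

variable [Ring R] [LinearOrder R] [IsStrictOrderedRing R] {L : Matrix ι ι R}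

theorem sum_colSum_nonpos_of_mem [DecidableEq ι] (hquasi : ∀ i j, i ≠ j → 0 ≤ L i j)
    (hcol : ∀ j, ∑ i, L i j = 0) {s : Finset ι} {j : ι} (hj : j ∈ s) :
    ∑ i ∈ s, L i j ≤ 0 := by
  have hcompl : 0 ≤ ∑ i ∈ sᶜ, L i j :=
    Finset.sum_nonneg fun i hi => hquasi i j fun hij => Finset.mem_compl.mp hi (hij ▸ hj)
  have hsplit := Finset.sum_add_sum_compl s (fun i => L i j)
  rw [hcol j] at hsplit
  exact eq_neg_of_add_eq_zero_left hsplit ▸ neg_nonpos.mpr hcompl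

theorem sum_mulVec_nonneg_of_nonpos_on [DecidableEq ι] (hquasi : ∀ i j, i ≠ j → 0 ≤ L i j)
    (hcol : ∀ j, ∑ i, L i j = 0) {s : Finset ι} {V : ι → R}
    (hs : ∀ j ∈ s, V j ≤ 0) (hsc : ∀ j ∉ s, 0 ≤ V j) :
    0 ≤ ∑ i ∈ s, (L *ᵥ V) i := by
  rw [sum_mulVec_eq_sum_colSum_mul]
  refine Finset.sum_nonneg fun j _ => ?_
  by_cases hj : j ∈ s
  · exact mul_nonneg_of_nonpos_of_nonpos (sum_colSum_nonpos_of_mem hquasi hcol hj) (hs j hj)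
  · exact mul_nonneg (Finset.sum_nonneg fun i hi => hquasi i j fun hij => hj (hij ▸ hi))
      (hsc j hj)

theorem pos_of_mulVec_neg_of_nonpos (hquasi : ∀ i j, i ≠ j → 0 ≤ L i j)
    (hcol : ∀ j, ∑ i, L i j = 0) {V : ι → R} (hneg : ∀ i, V i ≤ 0 → (L *ᵥ V) i < 0) (j : ι) :
    0 < V j := by
  classical
  by_contra! hj
  set s := Finset.univ.filter fun i => V i ≤ 0
  have hsum_neg : ∑ i ∈ s, (L *ᵥ V) i < 0 :=
    Finset.sum_neg (fun i hi => hneg i (Finset.mem_filter.mp hi).2)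
      ⟨j, Finset.mem_filter.mpr ⟨Finset.mem_univ j, hj⟩⟩
  have hsum_nonneg : 0 ≤ ∑ i ∈ s, (L *ᵥ V) i :=
    sum_mulVec_nonneg_of_nonpos_on hquasi hcol (fun i hi => (Finset.mem_filter.mp hi).2)
      fun i hi => le_of_not_ge fun h => hi (Finset.mem_filter.mpr ⟨Finset.mem_univ i, h⟩)
  exact hsum_neg.not_ge hsum_nonneg

end Matrix

theorem logistic_solution_upper_bound_general {n : ℕ}
    (L : Matrix (Fin n) (Fin n) ℝ)
    (hquasi : ∀ i j, i ≠ j → 0 ≤ L i j)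
    (hcol : ∀ j, ∑ i, L i j = 0)
    (α : Fin n → ℝ) (hα0 : L.mulVec α = 0)
    (dI N l : ℝ) (hl : 0 < l)
    (β γ U : Fin n → ℝ) (hβ : ∀ j, 0 < β j) (hγ : ∀ j, 0 < γ j)
    (hU : ∀ j, 0 < U j)
    (heq : ∀ i, dI * (∑ j, L i j * U j) +
      (l * β i * (N * α i - dI * U i) - γ i) * U i = 0) :
    ∀ j, dI * U j < N * α j := by
  set V : Fin n → ℝ := fun j => N * α j - dI * U j
  have hLV : ∀ i, L.mulVec V i = (l * β i * V i - γ i) * U i := by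
    intro i
    have hLα : ∑ j, L i j * α j = 0 := by simpa [Matrix.mulVec, dotProduct] using congrFun hα0 i
    have hLV_expand : L.mulVec V i = N * ∑ j, L i j * α j - dI * ∑ j, L i j * U j := by
      simp only [Matrix.mulVec, dotProduct, V, Finset.mul_sum, ← Finset.sum_sub_distrib]
      exact Finset.sum_congr rfl fun j _ => by ring
    linear_combination hLV_expand + N * hLα - heq i
  have hneg : ∀ i, V i ≤ 0 → L.mulVec V i < 0 := fun i hVi => by
    have hlβV : l * β i * V i ≤ 0 :=
      mul_nonpos_of_nonneg_of_nonpos (mul_pos hl (hβ i)).le hVi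
    rw [hLV]
    exact mul_neg_of_neg_of_pos (by linarith [hγ i]) (hU i)
  exact fun j => sub_pos.mp (Matrix.pos_of_mulVec_neg_of_nonpos hquasi hcol hneg j)

/-- A positive solution `U` of the logistic-type system
`d_I L U + (lβ∘(Nα - d_I U) - γ)∘U = 0` satisfies `d_I U_j < N α_j` for every `j`. -/
theorem logistic_solution_upper_bound {n : ℕ}
    (L : Matrix (Fin n) (Fin n) ℝ)
    (hquasi : ∀ i j, i ≠ j → 0 ≤ L i j)
    (hirr : L.IsIrreducibleOfCoords)
    (hcol : ∀ j, ∑ i, L i j = 0)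
    (α : Fin n → ℝ) (hα0 : L.mulVec α = 0) (hαpos : ∀ j, 0 < α j)
    (hαsum : ∑ j, α j = 1)
    (dI N l : ℝ) (hdI : 0 < dI) (hN : 0 < N) (hl : 0 < l)
    (β γ U : Fin n → ℝ) (hβ : ∀ j, 0 < β j) (hγ : ∀ j, 0 < γ j)
    (hU : ∀ j, 0 < U j)
    (heq : ∀ i, dI * (∑ j, L i j * U j) +
      (l * β i * (N * α i - dI * U i) - γ i) * U i = 0) :
    ∀ j, dI * U j < N * α j :=
  logistic_solution_upper_bound_general L hquasi hcol α hα0 dI N l hl β γ U hβ hγ hU heq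
end

section
/- Let $\mathcal{L}$ be quasi-positive, irreducible, with zero column sums, with normalized positive null vector $\alpha$, and let $\beta, r\in\mathbb{R}^n_{>0}$, $l>0$, $U\in\mathbb{R}^n_{>0}$. If $Z\in\mathbb{R}^n$ satisfies $\tfrac{1}{l}\mathcal{L}Z + \beta\circ(r - Z)\circ U = 0$ and $Z\gg 0$, then $\frac{\min_j r_j}{\max_j\alpha_j}\,\alpha_i \le Z_i \le \frac{\max_j r_j}{\min_j\alpha_j}\,\alpha_i$ for all $i$. -/
section MaximumPrinciple

open Finset Matrix

variable {ι 𝕜 : Type*} [Fintype ι] [Field 𝕜] [LinearOrder 𝕜] [IsStrictOrderedRing 𝕜]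
  {L : Matrix ι ι 𝕜} {α W Z : ι → 𝕜} {i : ι}

theorem Matrix.mulVec_apply_nonneg_of_nonneg_of_eq_zero
    (hquasi : ∀ i j, i ≠ j → 0 ≤ L i j) (hW : ∀ j, 0 ≤ W j) (hWi : W i = 0) :
    0 ≤ (L *ᵥ W) i := by
  refine sum_nonneg fun j _ => ?_
  by_cases hji : j = i
  · simp only [hji, hWi, mul_zero, le_refl]
  · exact mul_nonneg (hquasi i j (Ne.symm hji)) (hW j)

theorem Matrix.mulVec_apply_nonneg_of_isMin_div
    (hquasi : ∀ i j, i ≠ j → 0 ≤ L i j) (hα : L *ᵥ α = 0) (hαpos : ∀ j, 0 < α j)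
    (hmin : ∀ j, Z i / α i ≤ Z j / α j) :
    0 ≤ (L *ᵥ Z) i := by
  have hshift : L *ᵥ Z = L *ᵥ (Z - (Z i / α i) • α) := by
    rw [mulVec_sub, mulVec_smul, hα, smul_zero, sub_zero]
  rw [hshift]
  refine mulVec_apply_nonneg_of_nonneg_of_eq_zero hquasi (fun j => ?_) ?_
  · have := (le_div_iff₀ (hαpos j)).mp (hmin j)
    simpa only [Pi.sub_apply, Pi.smul_apply, smul_eq_mul, sub_nonneg] using this
  · simp only [Pi.sub_apply, Pi.smul_apply, smul_eq_mul, div_mul_cancel₀ _ (hαpos i).ne',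
      sub_self]

theorem Matrix.mulVec_apply_nonpos_of_isMax_div
    (hquasi : ∀ i j, i ≠ j → 0 ≤ L i j) (hα : L *ᵥ α = 0) (hαpos : ∀ j, 0 < α j)
    (hmax : ∀ j, Z j / α j ≤ Z i / α i) :
    (L *ᵥ Z) i ≤ 0 := by
  have := mulVec_apply_nonneg_of_isMin_div (Z := -Z) hquasi hα hαpos fun j => by
    simpa only [Pi.neg_apply, neg_div, neg_le_neg_iff] using hmax j
  simpa only [mulVec_neg, Pi.neg_apply, neg_nonneg] using this

end MaximumPrinciple

section ExtremalRatios

open Finset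

variable {ι 𝕜 : Type*} [Field 𝕜] [LinearOrder 𝕜] [IsStrictOrderedRing 𝕜]
  {s : Finset ι} {r α : ι → 𝕜} {i : ι}

theorem Finset.inf'_div_sup'_le (hs : s.Nonempty) (hi : i ∈ s) (hri : 0 ≤ r i)
    (hαi : 0 < α i) : s.inf' hs r / s.sup' hs α ≤ r i / α i :=
  div_le_div₀ hri (inf'_le r hi) hαi (le_sup' α hi)

theorem Finset.div_le_sup'_div_inf' (hs : s.Nonempty) (hi : i ∈ s) (hri : 0 ≤ r i)
    (hα : ∀ j ∈ s, 0 < α j) : r i / α i ≤ s.sup' hs r / s.inf' hs α :=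
  div_le_div₀ (hri.trans (le_sup' r hi)) (le_sup' r hi) ((lt_inf'_iff hs).mpr hα)
    (inf'_le α hi)

end ExtremalRatios

section Balance

variable {𝕜 : Type*} [Field 𝕜] [LinearOrder 𝕜] [IsStrictOrderedRing 𝕜] {l b u S r z : 𝕜}

theorem le_of_one_div_mul_add_mul_sub_mul_eq_zero (hl : 0 < l) (hb : 0 < b) (hu : 0 < u)
    (hS : 0 ≤ S) (h : 1 / l * S + b * (r - z) * u = 0) : r ≤ z := by
  have : 0 ≤ 1 / l * S := mul_nonneg (one_div_pos.mpr hl).le hS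
  nlinarith [mul_pos hb hu]

theorem le_of_one_div_mul_add_mul_sub_mul_eq_zero_of_nonpos (hl : 0 < l) (hb : 0 < b)
    (hu : 0 < u) (hS : S ≤ 0) (h : 1 / l * S + b * (r - z) * u = 0) : z ≤ r :=
  neg_le_neg_iff.mp <| le_of_one_div_mul_add_mul_sub_mul_eq_zero hl hb hu
    (neg_nonneg.mpr hS) (by linear_combination -h)

end Balance

theorem Z_comparison_bounds_general {n : ℕ} (hn : 0 < n)
    (L : Matrix (Fin n) (Fin n) ℝ)
    (hquasi : ∀ i j, i ≠ j → 0 ≤ L i j)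
    (α : Fin n → ℝ) (hα0 : L.mulVec α = 0) (hαpos : ∀ j, 0 < α j)
    (l : ℝ) (hl : 0 < l)
    (β r U Z : Fin n → ℝ)
    (hβ : ∀ j, 0 < β j) (hr : ∀ j, 0 < r j) (hU : ∀ j, 0 < U j)
    (heq : ∀ i, (1 / l) * (∑ j, L i j * Z j) + β i * (r i - Z i) * U i = 0) :
    ∀ i,
      (Finset.univ.inf' ⟨⟨0, hn⟩, Finset.mem_univ _⟩ r /
        Finset.univ.sup' ⟨⟨0, hn⟩, Finset.mem_univ _⟩ α) * α i ≤ Z i ∧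
      Z i ≤ (Finset.univ.sup' ⟨⟨0, hn⟩, Finset.mem_univ _⟩ r /
        Finset.univ.inf' ⟨⟨0, hn⟩, Finset.mem_univ _⟩ α) * α i := by
  have : Nonempty (Fin n) := ⟨⟨0, hn⟩⟩
  have hbalance : ∀ i, 1 / l * L.mulVec Z i + β i * (r i - Z i) * U i = 0 := heq
  obtain ⟨i₀, hmin⟩ := Finite.exists_min fun j => Z j / α j
  obtain ⟨i₁, hmax⟩ := Finite.exists_max fun j => Z j / α j
  have hr₀ : r i₀ ≤ Z i₀ := le_of_one_div_mul_add_mul_sub_mul_eq_zero hl (hβ i₀) (hU i₀)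
    (Matrix.mulVec_apply_nonneg_of_isMin_div hquasi hα0 hαpos hmin) (hbalance i₀)
  have hr₁ : Z i₁ ≤ r i₁ :=
    le_of_one_div_mul_add_mul_sub_mul_eq_zero_of_nonpos hl (hβ i₁) (hU i₁)
      (Matrix.mulVec_apply_nonpos_of_isMax_div hquasi hα0 hαpos hmax) (hbalance i₁)
  refine fun i => ⟨?_, ?_⟩
  · rw [← le_div_iff₀ (hαpos i)]
    calc _ ≤ r i₀ / α i₀ :=
          Finset.inf'_div_sup'_le _ (Finset.mem_univ i₀) (hr i₀).le (hαpos i₀)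
      _ ≤ Z i₀ / α i₀ := div_le_div_of_nonneg_right hr₀ (hαpos i₀).le
      _ ≤ Z i / α i := hmin i
  · rw [← div_le_iff₀ (hαpos i)]
    calc Z i / α i ≤ Z i₁ / α i₁ := hmax i
      _ ≤ r i₁ / α i₁ := div_le_div_of_nonneg_right hr₁ (hαpos i₁).le
      _ ≤ _ :=
          Finset.div_le_sup'_div_inf' _ (Finset.mem_univ i₁) (hr i₁).le fun j _ => hαpos j

/-- A positive solution `Z` of `(1/l) L Z + β∘(r - Z)∘U = 0` satisfies
`(min_j r_j / max_j α_j) α_i ≤ Z_i ≤ (max_j r_j / min_j α_j) α_i` for all `i`. -/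
theorem Z_comparison_bounds {n : ℕ} (hn : 0 < n)
    (L : Matrix (Fin n) (Fin n) ℝ)
    (hquasi : ∀ i j, i ≠ j → 0 ≤ L i j)
    (hirr : L.IsIrreducible')
    (hcol : ∀ j, ∑ i, L i j = 0)
    (α : Fin n → ℝ) (hα0 : L.mulVec α = 0) (hαpos : ∀ j, 0 < α j)
    (hαsum : ∑ j, α j = 1)
    (l : ℝ) (hl : 0 < l)
    (β r U Z : Fin n → ℝ)
    (hβ : ∀ j, 0 < β j) (hr : ∀ j, 0 < r j) (hU : ∀ j, 0 < U j)
    (hZpos : ∀ j, 0 < Z j)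
    (heq : ∀ i, (1 / l) * (∑ j, L i j * Z j) + β i * (r i - Z i) * U i = 0) :
    ∀ i,
      (Finset.univ.inf' ⟨⟨0, hn⟩, Finset.mem_univ _⟩ r /
        Finset.univ.sup' ⟨⟨0, hn⟩, Finset.mem_univ _⟩ α) * α i ≤ Z i ∧
      Z i ≤ (Finset.univ.sup' ⟨⟨0, hn⟩, Finset.mem_univ _⟩ r /
        Finset.univ.inf' ⟨⟨0, hn⟩, Finset.mem_univ _⟩ α) * α i :=
  Z_comparison_bounds_general hn L hquasi α hα0 hαpos l hl β r U Z hβ hr hU heq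
end
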